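/- arXiv:2401.03232 — 3 statements merged into one kernel-verified Lean document; each statement's English description precedes it below -/
import Mathlib

section
/- Let v⁰, …, vᵐ be points in ℝⁿ with mutual distances all at most D (diameter at most D), and κ their barycenter. Then for every i, ‖κ − vⁱ‖ ≤ (1/(m+1))·√(m²·D²) = (m/(m+1))·D; more precisely ‖κ − vⁱ‖² ≤ (1/(m+1)²)(m²D² − C(m,2)·s²) where s is the minimum edge length. -/
/-!
Put `wⱼ = vⱼ - vᵢ` for `j ≠ i`; then `(m + 1) (κ - vᵢ) = ∑ⱼ wⱼ`. The first bound is the triangle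
inequality, since `‖wⱼ‖ ≤ D`. For the second, the generalized Apollonius identity
`‖∑ⱼ wⱼ‖² = m ∑ⱼ ‖wⱼ‖² - ½ ∑ⱼ ∑ₖ ‖wⱼ - wₖ‖²` is bounded using `‖wⱼ‖ ≤ D` on the first sum and
`‖wⱼ - wₖ‖ = ‖vⱼ - vₖ‖ ≥ s` on the `m (m - 1)` off-diagonal terms of the second.
-/

open Finset RealInnerProductSpace

section

variable {E : Type*} [NormedAddCommGroup E] [InnerProductSpace ℝ E] {ι : Type*}

theorem norm_sum_sq_eq_card_mul_sum_norm_sq_sub (t : Finset ι) (w : ι → E) :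
    ‖∑ j ∈ t, w j‖ ^ 2 =
      #t * ∑ j ∈ t, ‖w j‖ ^ 2 - (∑ j ∈ t, ∑ k ∈ t, ‖w j - w k‖ ^ 2) / 2 := by
  have h_inner : ‖∑ j ∈ t, w j‖ ^ 2 = ∑ j ∈ t, ∑ k ∈ t, ⟪w j, w k⟫ := by
    rw [← real_inner_self_eq_norm_sq, sum_inner]
    exact sum_congr rfl fun j _ ↦ inner_sum _ _ _
  have h_pairs : ∑ j ∈ t, ∑ k ∈ t, ‖w j - w k‖ ^ 2 =
      2 * #t * ∑ j ∈ t, ‖w j‖ ^ 2 - 2 * ∑ j ∈ t, ∑ k ∈ t, ⟪w j, w k⟫ := by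
    simp only [norm_sub_sq_real, sum_add_distrib, sum_sub_distrib, sum_const, nsmul_eq_mul,
      ← mul_sum, sum_comm (γ := ι) (f := fun j k ↦ ‖w k‖ ^ 2)]
    ring
  rw [h_pairs, h_inner]
  ring

theorem norm_sum_sq_le_of_norm_le_of_le_norm_sub {t : Finset ι} {w : ι → E} {D s : ℝ}
    (hs : 0 ≤ s) (hD : ∀ j ∈ t, ‖w j‖ ≤ D)
    (hsep : ∀ j ∈ t, ∀ k ∈ t, j ≠ k → s ≤ ‖w j - w k‖) :
    ‖∑ j ∈ t, w j‖ ^ 2 ≤ (#t : ℝ) ^ 2 * D ^ 2 - (#t * (#t - 1) / 2) * s ^ 2 := by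
  classical
  have h_norms : ∑ j ∈ t, ‖w j‖ ^ 2 ≤ #t * D ^ 2 := by
    simpa using sum_le_sum fun j hj ↦ pow_le_pow_left₀ (norm_nonneg _) (hD j hj) 2
  have h_pairs : #t * (#t - 1) * s ^ 2 ≤ ∑ j ∈ t, ∑ k ∈ t, ‖w j - w k‖ ^ 2 := by
    calc (#t : ℝ) * (#t - 1) * s ^ 2
        = ∑ j ∈ t, ∑ k ∈ t, if j = k then 0 else s ^ 2 := by
          simp only [sum_ite, filter_ne, sum_const_zero, sum_const, zero_add, nsmul_eq_mul]
          rw [sum_congr rfl fun j hj ↦ by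
            rw [card_erase_of_mem hj, Nat.cast_pred (card_pos.2 ⟨j, hj⟩)], sum_const, nsmul_eq_mul]
          ring
      _ ≤ ∑ j ∈ t, ∑ k ∈ t, ‖w j - w k‖ ^ 2 := by
          refine sum_le_sum fun j hj ↦ sum_le_sum fun k hk ↦ ?_
          split_ifs with hjk
          · positivity
          · exact pow_le_pow_left₀ hs (hsep j hj k hk hjk) 2
  rw [norm_sum_sq_eq_card_mul_sum_norm_sq_sub]
  nlinarith [Nat.cast_nonneg (α := ℝ) #t]

theorem inv_card_smul_sum_sub_eq_inv_card_smul_sum_erase [Fintype ι] [DecidableEq ι]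
    (v : ι → E) (i : ι) :
    (Fintype.card ι : ℝ)⁻¹ • ∑ j, v j - v i =
      (Fintype.card ι : ℝ)⁻¹ • ∑ j ∈ univ.erase i, (v j - v i) := by
  have h_card : (Fintype.card ι : ℝ) ≠ 0 := Nat.cast_ne_zero.2 (Fintype.card_pos_iff.2 ⟨i⟩).ne'
  rw [sum_erase _ (sub_self _), sum_sub_distrib, sum_const, card_univ, smul_sub,
    ← Nat.cast_smul_eq_nsmul ℝ, smul_smul, inv_mul_cancel₀ h_card, one_smul]

end

theorem barycenter_vertex_bounds_general (n m : ℕ) (D s : ℝ) (hs : 0 ≤ s)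
    (v : Fin (m + 1) → EuclideanSpace ℝ (Fin n))
    (hD : ∀ p q, p ≠ q → ‖v p - v q‖ ≤ D)
    (hsle : ∀ p q, p ≠ q → s ≤ ‖v p - v q‖)
    (κ : EuclideanSpace ℝ (Fin n)) (hκ : κ = ((m : ℝ) + 1)⁻¹ • ∑ j, v j)
    (i : Fin (m + 1)) :
    ‖κ - v i‖ ≤ ((m : ℝ) / ((m : ℝ) + 1)) * D ∧
    ‖κ - v i‖ ^ 2 ≤ ((m : ℝ) + 1)⁻¹ ^ 2 *
      ((m : ℝ) ^ 2 * D ^ 2 - ((m : ℝ) * ((m : ℝ) - 1) / 2) * s ^ 2) := by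
  set t := univ.erase i
  have h_card : #t = m := by simp [t]
  have h_edge : ∀ j ∈ t, ‖v j - v i‖ ≤ D := fun j hj ↦ hD j i (ne_of_mem_erase hj)
  have h_norm : ‖κ - v i‖ = ((m : ℝ) + 1)⁻¹ * ‖∑ j ∈ t, (v j - v i)‖ := by
    have h_shift := inv_card_smul_sum_sub_eq_inv_card_smul_sum_erase v i
    rw [Fintype.card_fin, Nat.cast_succ] at h_shift
    rw [hκ, h_shift, norm_smul, Real.norm_of_nonneg (by positivity)]
  constructor
  · have h_tri : ‖∑ j ∈ t, (v j - v i)‖ ≤ m * D := by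
      simpa [h_card] using norm_sum_le_of_le t h_edge
    rw [h_norm, div_eq_inv_mul, mul_assoc]
    gcongr
  · have h_sep : ∀ j ∈ t, ∀ k ∈ t, j ≠ k → s ≤ ‖(v j - v i) - (v k - v i)‖ :=
      fun j _ k _ hjk ↦ by simpa using hsle j k hjk
    have h_apollonius := norm_sum_sq_le_of_norm_le_of_le_norm_sub hs h_edge h_sep
    rw [h_card] at h_apollonius
    rw [h_norm, mul_pow]
    gcongr

/-- Bounds for the distance from the barycenter to the vertices in terms of the
diameter D and the shortest edge length s. -/
theorem barycenter_vertex_bounds (n m : ℕ) (hm : 0 < m) (D s : ℝ) (hs : 0 ≤ s)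
    (v : Fin (m + 1) → EuclideanSpace ℝ (Fin n))
    (hD : ∀ p q, p ≠ q → ‖v p - v q‖ ≤ D)
    (hsle : ∀ p q, p ≠ q → s ≤ ‖v p - v q‖)
    (κ : EuclideanSpace ℝ (Fin n)) (hκ : κ = ((m : ℝ) + 1)⁻¹ • ∑ j, v j)
    (i : Fin (m + 1)) :
    ‖κ - v i‖ ≤ ((m : ℝ) / ((m : ℝ) + 1)) * D ∧
    ‖κ - v i‖ ^ 2 ≤ ((m : ℝ) + 1)⁻¹ ^ 2 *
      ((m : ℝ) ^ 2 * D ^ 2 - ((m : ℝ) * ((m : ℝ) - 1) / 2) * s ^ 2) :=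
  barycenter_vertex_bounds_general n m D s hs v hD hsle κ hκ i
end

section
/- Let σ₀ be an m-simplex in ℝⁿ and let σ_p be any m-simplex produced after p successive longest-edge bisections of σ₀ (at each step the longest edge [vⁱ, vʲ] is replaced by one of the two halves through its midpoint M = (vⁱ+vʲ)/2). Then diam(σ_p) ≤ (√3/2)^{⌊p/m⌋}·diam(σ₀), where diam denotes the length of the longest edge. -/
/-- `Bisect v w` : the simplex with vertices `w` is one of the two elements of the
longest-edge bisection of the simplex with vertices `v`. -/
def Bisect {n m : ℕ} (v w : Fin (m + 1) → EuclideanSpace ℝ (Fin n)) : Prop :=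
  ∃ i j : Fin (m + 1), i ≠ j ∧
    (∀ p q : Fin (m + 1), ‖v p - v q‖ ≤ ‖v i - v j‖) ∧
    (w = Function.update v i (midpoint ℝ (v i) (v j)) ∨
     w = Function.update v j (midpoint ℝ (v i) (v j)))

namespace KearfottAux

noncomputable def c : ℝ := Real.sqrt 3 / 2

lemma c_nonneg : (0 : ℝ) ≤ c := by unfold c; positivity

lemma c_le_one : c ≤ 1 := by
  unfold c
  rw [div_le_one (by norm_num)]
  have : Real.sqrt 3 ≤ Real.sqrt 4 := Real.sqrt_le_sqrt (by norm_num)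
  calc Real.sqrt 3 ≤ Real.sqrt 4 := this
    _ = 2 := by
        rw [show (4 : ℝ) = 2 ^ 2 by norm_num, Real.sqrt_sq (by norm_num : (0:ℝ) ≤ 2)]

variable {n m : ℕ}

/-- Median inequality: the distance from any point to the midpoint of the longest
edge is at most `(√3/2) L`. -/
lemma median_le {x a b : EuclideanSpace ℝ (Fin n)} {L : ℝ}
    (hxa : dist x a ≤ L) (hxb : dist x b ≤ L) (hab : L ≤ dist a b) :
    dist x (midpoint ℝ a b) ≤ c * L := by
  have hL : 0 ≤ L := le_trans dist_nonneg hxa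
  have h := EuclideanGeometry.dist_sq_add_dist_sq_eq_two_mul_dist_midpoint_sq_add_half_dist_sq
    x a b
  have h1 : dist x a ^ 2 ≤ L ^ 2 := pow_le_pow_left₀ dist_nonneg hxa 2
  have h2 : dist x b ^ 2 ≤ L ^ 2 := pow_le_pow_left₀ dist_nonneg hxb 2
  have h3 : L ^ 2 ≤ dist a b ^ 2 := pow_le_pow_left₀ hL hab 2
  have key : dist x (midpoint ℝ a b) ^ 2 ≤ 3 / 4 * L ^ 2 := by nlinarith
  have hsq : (3 : ℝ) / 4 * L ^ 2 = (c * L) ^ 2 := by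
    unfold c
    rw [mul_pow, div_pow, Real.sq_sqrt (by norm_num : (0:ℝ) ≤ 3)]
    ring
  have : dist x (midpoint ℝ a b) ≤ Real.sqrt ((c * L) ^ 2) := by
    rw [← Real.sqrt_sq (dist_nonneg (x := x) (y := midpoint ℝ a b))]
    exact Real.sqrt_le_sqrt (by linarith [key, hsq.symm.le] )
  rwa [Real.sqrt_sq (mul_nonneg c_nonneg hL)] at this

/-- One bisection step, for the explicit case where vertex `a` is replaced. -/
lemma stepAux {v w : Fin (m + 1) → EuclideanSpace ℝ (Fin n)} {d : ℝ} (hd : 0 ≤ d)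
    {a b : Fin (m + 1)} (hab : a ≠ b)
    (hmax : ∀ p q, dist (v p) (v q) ≤ dist (v a) (v b))
    (hw : w = Function.update v a (midpoint ℝ (v a) (v b)))
    (hv : ∀ p q, dist (v p) (v q) ≤ d)
    {S : Finset (Fin (m + 1))}
    (hS : ∀ p q : Fin (m + 1), (p ∈ S ∧ q ∈ S ∧ p ≠ q) ∨ dist (v p) (v q) ≤ c * d) :
    (∀ p q, dist (w p) (w q) ≤ d) ∧
      ∃ T : Finset (Fin (m + 1)), (T = ∅ ∨ ∃ r ∈ S, T = S.erase r) ∧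
        ∀ p q : Fin (m + 1), (p ∈ T ∧ q ∈ T ∧ p ≠ q) ∨ dist (w p) (w q) ≤ c * d := by
  set L := dist (v a) (v b) with hLdef
  have hLnn : 0 ≤ L := dist_nonneg
  have hLd : L ≤ d := hv a b
  have hwa : w a = midpoint ℝ (v a) (v b) := by rw [hw]; exact Function.update_self _ _ _
  have hwq : ∀ q, q ≠ a → w q = v q := fun q hq => by
    rw [hw]; exact Function.update_of_ne hq _ _
  -- edges from the new vertex
  have hnew : ∀ q, dist (w a) (w q) ≤ c * L := by
    intro q
    by_cases hq : q = a
    · subst hq; simp [mul_nonneg c_nonneg hLnn]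
    · rw [hwa, hwq q hq, dist_comm]
      exact median_le (hmax q a) (hmax q b) le_rfl
  have hcL_le_L : c * L ≤ L := by
    calc c * L ≤ 1 * L := mul_le_mul_of_nonneg_right c_le_one hLnn
      _ = L := one_mul L
  have hmono : ∀ p q, dist (w p) (w q) ≤ d := by
    intro p q
    by_cases hp : p = a
    · subst hp; exact le_trans (hnew q) (le_trans hcL_le_L hLd)
    · by_cases hq : q = a
      · subst hq
        rw [dist_comm]
        exact le_trans (hnew p) (le_trans hcL_le_L hLd)
      · rw [hwq p hp, hwq q hq]; exact hv p q
  refine ⟨hmono, ?_⟩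
  have hcLcd : c * L ≤ c * d := mul_le_mul_of_nonneg_left hLd c_nonneg
  by_cases hcase : L ≤ c * d
  · refine ⟨∅, Or.inl rfl, fun p q => Or.inr ?_⟩
    by_cases hp : p = a
    · subst hp; exact le_trans (hnew q) (le_trans hcL_le_L hcase)
    · by_cases hq : q = a
      · subst hq; rw [dist_comm]
        exact le_trans (hnew p) (le_trans hcL_le_L hcase)
      · rw [hwq p hp, hwq q hq]
        exact le_trans (hmax p q) hcase
  · push_neg at hcase
    have habS : a ∈ S ∧ b ∈ S ∧ a ≠ b := by
      rcases hS a b with h | h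
      · exact h
      · exact absurd h (not_le.mpr hcase)
    refine ⟨S.erase a, Or.inr ⟨a, habS.1, rfl⟩, fun p q => ?_⟩
    by_cases hp : p = a
    · subst hp; exact Or.inr (le_trans (hnew q) hcLcd)
    · by_cases hq : q = a
      · subst hq
        refine Or.inr ?_
        rw [dist_comm]
        exact le_trans (hnew p) hcLcd
      · rcases hS p q with ⟨hpS, hqS, hpq⟩ | h
        · exact Or.inl ⟨Finset.mem_erase.mpr ⟨hp, hpS⟩, Finset.mem_erase.mpr ⟨hq, hqS⟩, hpq⟩
        · rw [hwq p hp, hwq q hq]; exact Or.inr h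

/-- One bisection step preserves the invariants. -/
lemma step {v w : Fin (m + 1) → EuclideanSpace ℝ (Fin n)} {d : ℝ} (hd : 0 ≤ d)
    (hb : Bisect v w)
    (hv : ∀ p q, dist (v p) (v q) ≤ d)
    {S : Finset (Fin (m + 1))}
    (hS : ∀ p q : Fin (m + 1), (p ∈ S ∧ q ∈ S ∧ p ≠ q) ∨ dist (v p) (v q) ≤ c * d) :
    (∀ p q, dist (w p) (w q) ≤ d) ∧
      ∃ T : Finset (Fin (m + 1)), (T = ∅ ∨ ∃ r ∈ S, T = S.erase r) ∧
        ∀ p q : Fin (m + 1), (p ∈ T ∧ q ∈ T ∧ p ≠ q) ∨ dist (w p) (w q) ≤ c * d := by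
  obtain ⟨i, j, hij, hmax, hcases⟩ := hb
  simp only [← dist_eq_norm] at hmax
  rcases hcases with hw | hw
  · exact stepAux hd hij hmax hw hv hS
  · have hmax' : ∀ p q, dist (v p) (v q) ≤ dist (v j) (v i) := by
      intro p q; rw [dist_comm (v j)]; exact hmax p q
    have hw' : w = Function.update v j (midpoint ℝ (v j) (v i)) := by
      rw [midpoint_comm]; exact hw
    exact stepAux hd hij.symm hmax' hw' hv hS

/-- Simple monotonicity: one bisection does not increase the max edge length. -/
lemma mono {v w : Fin (m + 1) → EuclideanSpace ℝ (Fin n)} {d : ℝ} (hd : 0 ≤ d)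
    (hb : Bisect v w) (hv : ∀ p q, dist (v p) (v q) ≤ d) :
    ∀ p q, dist (w p) (w q) ≤ d := by
  have hS : ∀ p q : Fin (m + 1),
      (p ∈ (Finset.univ : Finset (Fin (m + 1))) ∧ q ∈ (Finset.univ : Finset (Fin (m + 1)))
        ∧ p ≠ q) ∨ dist (v p) (v q) ≤ c * d := by
    intro p q
    by_cases hpq : p = q
    · subst hpq; exact Or.inr (by simp [mul_nonneg c_nonneg hd])
    · exact Or.inl ⟨Finset.mem_univ _, Finset.mem_univ _, hpq⟩
  exact (step hd hb hv hS).1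

lemma mono_steps {σ : ℕ → Fin (m + 1) → EuclideanSpace ℝ (Fin n)} {d : ℝ} (hd : 0 ≤ d)
    (p : ℕ) (hbis : ∀ k < p, Bisect (σ k) (σ (k + 1)))
    (h0 : ∀ i j, dist (σ 0 i) (σ 0 j) ≤ d) :
    ∀ i j, dist (σ p i) (σ p j) ≤ d := by
  induction p with
  | zero => exact h0
  | succ k ih =>
    have hk := ih (fun l hl => hbis l (Nat.lt_succ_of_lt hl))
    exact mono hd (hbis k (Nat.lt_succ_self k)) hk

/-- After `m` bisections, the maximal edge length shrinks by `√3/2`. -/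
lemma m_steps {σ : ℕ → Fin (m + 1) → EuclideanSpace ℝ (Fin n)} {d : ℝ} (hd : 0 ≤ d)
    (hbis : ∀ k < m, Bisect (σ k) (σ (k + 1)))
    (h0 : ∀ i j, dist (σ 0 i) (σ 0 j) ≤ d) :
    ∀ i j, dist (σ m i) (σ m j) ≤ c * d := by
  have key : ∀ k ≤ m, (∀ i j, dist (σ k i) (σ k j) ≤ d) ∧
      ∃ S : Finset (Fin (m + 1)), S.card + k ≤ m + 1 ∧
        ∀ p q : Fin (m + 1), (p ∈ S ∧ q ∈ S ∧ p ≠ q) ∨ dist (σ k p) (σ k q) ≤ c * d := by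
    intro k hk
    induction k with
    | zero =>
      refine ⟨h0, Finset.univ, by simp, fun p q => ?_⟩
      by_cases hpq : p = q
      · subst hpq; exact Or.inr (by simp [mul_nonneg c_nonneg hd])
      · exact Or.inl ⟨Finset.mem_univ _, Finset.mem_univ _, hpq⟩
    | succ l ih =>
      obtain ⟨hvd, S, hcard, hS⟩ := ih (le_of_lt hk)
      obtain ⟨hwd, T, hT, hTS⟩ := step hd (hbis l hk) hvd hS
      refine ⟨hwd, T, ?_, hTS⟩
      rcases hT with rfl | ⟨r, hrS, rfl⟩
      · simp; omega
      · have : (S.erase r).card = S.card - 1 := Finset.card_erase_of_mem hrS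
        have hSpos : 1 ≤ S.card := Finset.card_pos.mpr ⟨r, hrS⟩
        omega
  obtain ⟨_, S, hcard, hS⟩ := key m le_rfl
  intro i j
  by_cases hij : i = j
  · subst hij; simp [mul_nonneg c_nonneg hd]
  · rcases hS i j with ⟨hiS, hjS, _⟩ | h
    · exfalso
      have : 1 < S.card := Finset.one_lt_card.mpr ⟨i, hiS, j, hjS, hij⟩
      omega
    · exact h

lemma main_edges (hm : 0 < m) :
    ∀ p : ℕ, ∀ σ : ℕ → Fin (m + 1) → EuclideanSpace ℝ (Fin n), ∀ d : ℝ, 0 ≤ d →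
      (∀ k < p, Bisect (σ k) (σ (k + 1))) →
      (∀ i j, dist (σ 0 i) (σ 0 j) ≤ d) →
      ∀ i j, dist (σ p i) (σ p j) ≤ c ^ (p / m) * d := by
  intro p
  induction p using Nat.strong_induction_on with
  | _ p ih =>
    intro σ d hd hbis h0 i j
    by_cases hpm : p < m
    · rw [Nat.div_eq_of_lt hpm, pow_zero, one_mul]
      exact mono_steps hd p hbis h0 i j
    · push_neg at hpm
      have hmid : ∀ i j, dist (σ m i) (σ m j) ≤ c * d :=
        m_steps hd (fun k hk => hbis k (lt_of_lt_of_le hk hpm)) h0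
      have hsub : p - m < p := Nat.sub_lt (lt_of_lt_of_le hm hpm) hm
      have hrec := ih (p - m) hsub (fun k => σ (m + k)) (c * d)
        (mul_nonneg c_nonneg hd)
        (fun k hk => by
          have : m + k < p := by omega
          have h := hbis (m + k) this
          rwa [show m + k + 1 = m + (k + 1) by omega] at h)
        hmid i j
      rw [show m + (p - m) = p by omega] at hrec
      calc dist (σ p i) (σ p j) ≤ c ^ ((p - m) / m) * (c * d) := hrec
        _ = c ^ ((p - m) / m + 1) * d := by rw [pow_succ]; ring
        _ = c ^ (p / m) * d := by rw [Nat.div_eq_sub_div hm hpm]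

end KearfottAux

/-- Kearfott's theorem (1978): diameter reduction under repeated longest-edge bisection. -/
theorem kearfott_bisection (n m : ℕ) (hm : 0 < m) (p : ℕ)
    (σ : ℕ → Fin (m + 1) → EuclideanSpace ℝ (Fin n))
    (hbis : ∀ k < p, Bisect (σ k) (σ (k + 1))) :
    Metric.diam (Set.range (σ p)) ≤
      (Real.sqrt 3 / 2) ^ (p / m) * Metric.diam (Set.range (σ 0)) := by
  set D := Metric.diam (Set.range (σ 0)) with hD
  have hDnn : 0 ≤ D := Metric.diam_nonneg
  have h0 : ∀ i j, dist (σ 0 i) (σ 0 j) ≤ D := fun i j =>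
    Metric.dist_le_diam_of_mem ((Set.finite_range _).isBounded) ⟨i, rfl⟩ ⟨j, rfl⟩
  have hedges := KearfottAux.main_edges hm p σ D hDnn hbis h0
  have hC : 0 ≤ KearfottAux.c ^ (p / m) * D :=
    mul_nonneg (pow_nonneg KearfottAux.c_nonneg _) hDnn
  have hle : Metric.diam (Set.range (σ p)) ≤ KearfottAux.c ^ (p / m) * D := by
    refine Metric.diam_le_of_forall_dist_le hC ?_
    rintro x ⟨i, rfl⟩ y ⟨j, rfl⟩
    exact hedges i j
  simpa [KearfottAux.c] using hle
end

section
/- Let σ_p be an m-simplex produced after p longest-edge bisections of an m-simplex σ₀ in ℝⁿ, with barycenter κ_p. Then for every point x in σ_p, ‖x − κ_p‖ ≤ (m/(m+1))·(√3/2)^{⌊p/m⌋}·diam(σ₀). -/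
open Finset EuclideanGeometry

theorem dist_midpoint_le_of_dist_le {V P : Type*} [NormedAddCommGroup V]
    [InnerProductSpace ℝ V] [MetricSpace P] [NormedAddTorsor V P] {a b c : P}
    (hac : dist c a ≤ dist a b) (hbc : dist c b ≤ dist a b) :
    dist c (midpoint ℝ a b) ≤ Real.sqrt 3 / 2 * dist a b := by
  have hapollonius := dist_sq_add_dist_sq_eq_two_mul_dist_midpoint_sq_add_half_dist_sq c a b
  have hsq : dist c (midpoint ℝ a b) ^ 2 ≤ (Real.sqrt 3 / 2 * dist a b) ^ 2 := by
    rw [mul_pow, div_pow, Real.sq_sqrt zero_le_three]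
    nlinarith [dist_nonneg (x := c) (y := a), dist_nonneg (x := c) (y := b)]
  exact (pow_le_pow_iff_left₀ dist_nonneg (by positivity) two_ne_zero).mp hsq

theorem dist_update_le {ι α : Type*} [DecidableEq ι] [PseudoMetricSpace α] {v : ι → α}
    {μ : α} {c : ℝ} {S : Finset ι} (r : ι) (hμ : ∀ q, dist (v q) μ ≤ c)
    (hS : ∀ p q, p ∉ S → dist (v p) (v q) ≤ c) :
    ∀ p q, p ∉ S.erase r → dist (Function.update v r μ p) (Function.update v r μ q) ≤ c := by
  intro p q hp
  rcases eq_or_ne p r with rfl | hpr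
  · rcases eq_or_ne q p with rfl | hqp
    · rw [dist_self]
      exact dist_nonneg.trans (hμ q)
    · rw [Function.update_self, Function.update_of_ne hqp, dist_comm]
      exact hμ q
  · have hpS : p ∉ S := fun h => hp (mem_erase.mpr ⟨hpr, h⟩)
    rw [Function.update_of_ne hpr]
    rcases eq_or_ne q r with rfl | hqr
    · rw [Function.update_self]
      exact hμ p
    · rw [Function.update_of_ne hqr]
      exact hS p q hpS

theorem dist_centroid_le_of_dist_le {E : Type*} [NormedAddCommGroup E] [NormedSpace ℝ E]
    {m : ℕ} (v : Fin (m + 1) → E) {c : ℝ} (h : ∀ i j, dist (v i) (v j) ≤ c) {x : E}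
    (hx : x ∈ convexHull ℝ (Set.range v)) :
    dist x (((m : ℝ) + 1)⁻¹ • ∑ j, v j) ≤ (m : ℝ) / ((m : ℝ) + 1) * c := by
  set κ := ((m : ℝ) + 1)⁻¹ • ∑ j, v j
  have hvertex : ∀ j, dist (v j) κ ≤ (m : ℝ) / ((m : ℝ) + 1) * c := by
    intro j
    have hdiff : v j - κ = ((m : ℝ) + 1)⁻¹ • ∑ i ∈ univ.erase j, (v j - v i) := by
      rw [sum_erase _ (sub_self _), sum_sub_distrib, sum_const, card_univ, Fintype.card_fin,
        ← Nat.cast_smul_eq_nsmul ℝ, smul_sub, smul_smul, Nat.cast_succ,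
        inv_mul_cancel₀ (by positivity), one_smul]
    have hsum : ‖∑ i ∈ univ.erase j, (v j - v i)‖ ≤ m * c := by
      calc ‖∑ i ∈ univ.erase j, (v j - v i)‖ ≤ ∑ i ∈ univ.erase j, c :=
            norm_sum_le_of_le _ fun i _ => (dist_eq_norm _ _).symm.trans_le (h j i)
        _ = m * c := by simp
    rw [dist_eq_norm, hdiff, norm_smul, Real.norm_of_nonneg (by positivity), div_eq_inv_mul,
      mul_assoc]
    gcongr
  obtain ⟨_, ⟨j, rfl⟩, hxj⟩ := convexHull_exists_dist_ge hx κ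
  exact hxj.trans (hvertex j)

section Bisection

variable {n m : ℕ}

theorem Bisect.exists_eq_update {v w : Fin (m + 1) → EuclideanSpace ℝ (Fin n)}
    (h : Bisect v w) :
    ∃ r s : Fin (m + 1), ∃ μ, w = Function.update v r μ ∧
      (∀ p q, dist (v p) (v q) ≤ dist (v r) (v s)) ∧
      ∀ q, dist (v q) μ ≤ Real.sqrt 3 / 2 * dist (v r) (v s) := by
  obtain ⟨i, j, -, hmax, hw | hw⟩ := h <;> simp only [← dist_eq_norm] at hmax
  · exact ⟨i, j, _, hw, hmax, fun q => dist_midpoint_le_of_dist_le (hmax q i) (hmax q j)⟩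
  · refine ⟨j, i, _, hw, fun p q => dist_comm (v i) (v j) ▸ hmax p q, fun q => ?_⟩
    rw [dist_comm (v j)]
    exact dist_midpoint_le_of_dist_le (hmax q i) (hmax q j)

theorem Bisect.dist_le {v w : Fin (m + 1) → EuclideanSpace ℝ (Fin n)} (h : Bisect v w)
    {d : ℝ} (hd : ∀ p q, dist (v p) (v q) ≤ d) : ∀ p q, dist (w p) (w q) ≤ d := by
  obtain ⟨r, s, μ, rfl, -, hμ⟩ := h.exists_eq_update
  have hsqrt : Real.sqrt 3 / 2 ≤ 1 := by
    rw [div_le_one two_pos, Real.sqrt_le_left two_pos.le]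
    norm_num
  have hμd : ∀ q, dist (v q) μ ≤ d := fun q =>
    (hμ q).trans ((mul_le_of_le_one_left dist_nonneg hsqrt).trans (hd r s))
  simpa using dist_update_le (S := ∅) r hμd fun p q _ => hd p q

theorem Bisect.exists_finset_dist_le {v w : Fin (m + 1) → EuclideanSpace ℝ (Fin n)}
    (h : Bisect v w) {d : ℝ} (hd : ∀ p q, dist (v p) (v q) ≤ d) {S : Finset (Fin (m + 1))}
    (hS : ∀ p q, p ∉ S → dist (v p) (v q) ≤ Real.sqrt 3 / 2 * d) :
    ∃ T : Finset (Fin (m + 1)), T.card ≤ S.card - 1 ∧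
      ∀ p q, p ∉ T → dist (w p) (w q) ≤ Real.sqrt 3 / 2 * d := by
  obtain ⟨r, s, μ, rfl, hmax, hμ⟩ := h.exists_eq_update
  have hμd : ∀ q, dist (v q) μ ≤ Real.sqrt 3 / 2 * d := fun q =>
    (hμ q).trans (by gcongr; exact hd r s)
  by_cases hr : r ∈ S
  · exact ⟨S.erase r, (card_erase_of_mem hr).le, dist_update_le r hμd hS⟩
  · -- the longest edge starts outside `S`, so it is short, and then so is every edge
    have hshort : ∀ p q, p ∉ (∅ : Finset (Fin (m + 1))) →
        dist (v p) (v q) ≤ Real.sqrt 3 / 2 * d := fun p q _ => (hmax p q).trans (hS r s hr)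
    exact ⟨∅, by simp, by simpa using dist_update_le r hμd hshort⟩

variable {σ : ℕ → Fin (m + 1) → EuclideanSpace ℝ (Fin n)}

theorem dist_le_of_bisect_chain {a b : ℕ} (hbis : ∀ k < b, Bisect (σ k) (σ (k + 1)))
    (hab : a ≤ b) {c : ℝ} (hc : ∀ p q, dist (σ a p) (σ a q) ≤ c) :
    ∀ p q, dist (σ b p) (σ b q) ≤ c := by
  induction b, hab using Nat.le_induction with
  | base => exact hc
  | succ b _ ih => exact (hbis b b.lt_succ_self).dist_le (ih fun k hk => hbis k (by omega))

theorem exists_finset_dist_le_of_bisect_chain {K : ℕ}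
    (hbis : ∀ k < K, Bisect (σ k) (σ (k + 1))) {d : ℝ}
    (hd : ∀ p q, dist (σ 0 p) (σ 0 q) ≤ d) :
    ∃ S : Finset (Fin (m + 1)), S.card ≤ m + 1 - K ∧
      ∀ p q, p ∉ S → dist (σ K p) (σ K q) ≤ Real.sqrt 3 / 2 * d := by
  induction K with
  | zero => exact ⟨univ, by simp, fun p _ hp => absurd (mem_univ p) hp⟩
  | succ K ih =>
    have hbis' : ∀ k < K, Bisect (σ k) (σ (k + 1)) := fun k hk => hbis k (by omega)
    obtain ⟨S, hcard, hS⟩ := ih hbis'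
    obtain ⟨T, hT, hTd⟩ := (hbis K K.lt_succ_self).exists_finset_dist_le
      (dist_le_of_bisect_chain hbis' K.zero_le hd) hS
    exact ⟨T, by omega, hTd⟩

theorem dist_le_of_bisect_chain_length (hbis : ∀ k < m, Bisect (σ k) (σ (k + 1))) {d : ℝ}
    (hd : ∀ p q, dist (σ 0 p) (σ 0 q) ≤ d) :
    ∀ p q, dist (σ m p) (σ m q) ≤ Real.sqrt 3 / 2 * d := by
  obtain ⟨S, hcard, hS⟩ := exists_finset_dist_le_of_bisect_chain hbis hd
  intro p q
  by_cases hp : p ∈ S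
  · by_cases hq : q ∈ S
    · rw [card_le_one.mp (by omega) p hp q hq, dist_self]
      exact mul_nonneg (by positivity) (dist_nonneg.trans (hd 0 0))
    · rw [dist_comm]
      exact hS q p hq
  · exact hS p q hp

theorem dist_le_of_bisect_chain_pow {K : ℕ} (hbis : ∀ k < K, Bisect (σ k) (σ (k + 1)))
    {d : ℝ} (hd : ∀ p q, dist (σ 0 p) (σ 0 q) ≤ d) :
    ∀ p q, dist (σ K p) (σ K q) ≤ (Real.sqrt 3 / 2) ^ (K / m) * d := by
  have hblocks : ∀ t, t * m ≤ K →
      ∀ p q, dist (σ (t * m) p) (σ (t * m) q) ≤ (Real.sqrt 3 / 2) ^ t * d := by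
    intro t
    induction t with
    | zero => simpa using hd
    | succ t ih =>
      rw [Nat.succ_mul, pow_succ', mul_assoc]
      intro ht
      exact dist_le_of_bisect_chain_length (σ := fun k => σ (t * m + k))
        (fun k hk => hbis _ (by omega)) (ih (by omega))
  exact dist_le_of_bisect_chain hbis (Nat.div_mul_le_self K m)
    (hblocks _ (Nat.div_mul_le_self K m))

end Bisection

theorem bisection_barycenter_bound_general (n m : ℕ) (p : ℕ)
    (σ : ℕ → Fin (m + 1) → EuclideanSpace ℝ (Fin n))
    (hbis : ∀ k < p, Bisect (σ k) (σ (k + 1)))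
    (κp : EuclideanSpace ℝ (Fin n)) (hκp : κp = ((m : ℝ) + 1)⁻¹ • ∑ j, σ p j) :
    ∀ x ∈ convexHull ℝ (Set.range (σ p)),
      ‖x - κp‖ ≤ ((m : ℝ) / ((m : ℝ) + 1)) * (Real.sqrt 3 / 2) ^ (p / m) *
        Metric.diam (Set.range (σ 0)) := by
  intro x hx
  have hd : ∀ i j, dist (σ 0 i) (σ 0 j) ≤ Metric.diam (Set.range (σ 0)) := fun i j =>
    Metric.dist_le_diam_of_mem (Set.finite_range _).isBounded ⟨i, rfl⟩ ⟨j, rfl⟩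
  rw [hκp, ← dist_eq_norm, mul_assoc]
  exact dist_centroid_le_of_dist_le (σ p) (dist_le_of_bisect_chain_pow hbis hd) hx

/-- Every point of a simplex obtained after p longest-edge bisections is within
(m/(m+1))·(√3/2)^⌊p/m⌋·diam(σ₀) of its barycenter. -/
theorem bisection_barycenter_bound (n m : ℕ) (hm : 0 < m) (p : ℕ)
    (σ : ℕ → Fin (m + 1) → EuclideanSpace ℝ (Fin n))
    (hbis : ∀ k < p, Bisect (σ k) (σ (k + 1)))
    (κp : EuclideanSpace ℝ (Fin n)) (hκp : κp = ((m : ℝ) + 1)⁻¹ • ∑ j, σ p j) :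
    ∀ x ∈ convexHull ℝ (Set.range (σ p)),
      ‖x - κp‖ ≤ ((m : ℝ) / ((m : ℝ) + 1)) * (Real.sqrt 3 / 2) ^ (p / m) *
        Metric.diam (Set.range (σ 0)) :=
  bisection_barycenter_bound_general n m p σ hbis κp hκp
end
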